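/- arXiv:0809.4477 — 2 statements merged into one kernel-verified Lean document; each statement's English description precedes it below -/
import Mathlib

section
/- For g ≥ 1 and any L ≥ 1, let Sp_{2g}(Z, L) be the kernel of the reduction map Sp_{2g}(Z) → Sp_{2g}(Z/LZ). Then the coinvariants of the standard action of Sp_{2g}(Z, L) on Q^{2g} are zero. -/
open Matrix

lemma aux_upper_mem {g : ℕ} (B : Matrix (Fin g) (Fin g) ℤ) (hB : Bᵀ = B) :
    fromBlocks 1 B 0 1 ∈ Matrix.symplecticGroup (Fin g) ℤ := by
  rw [SymplecticGroup.mem_iff, Matrix.J]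
  simp only [Matrix.fromBlocks_transpose, Matrix.fromBlocks_multiply, Matrix.transpose_one,
    Matrix.transpose_zero, hB]
  simp [Matrix.fromBlocks_multiply, hB]

lemma aux_lower_mem {g : ℕ} (C : Matrix (Fin g) (Fin g) ℤ) (hC : Cᵀ = C) :
    fromBlocks 1 0 C 1 ∈ Matrix.symplecticGroup (Fin g) ℤ := by
  rw [SymplecticGroup.mem_iff, Matrix.J]
  simp only [Matrix.fromBlocks_transpose, Matrix.fromBlocks_multiply, Matrix.transpose_one,
    Matrix.transpose_zero, hC]
  simp [Matrix.fromBlocks_multiply, hC]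

lemma aux_std_symm {g : ℕ} (j : Fin g) (c : ℤ) :
    (Matrix.single j j c)ᵀ = Matrix.single j j c := by
  ext a b
  simp [Matrix.single, and_comm]

lemma aux_main (g L : ℕ) (i : Fin g ⊕ Fin g) :
    ∃ S : Matrix (Fin g ⊕ Fin g) (Fin g ⊕ Fin g) ℤ,
        S ∈ Matrix.symplecticGroup (Fin g) ℤ ∧
        (∀ a b, ((S a b : ZMod L)) =
          (((1 : Matrix (Fin g ⊕ Fin g) (Fin g ⊕ Fin g) ℤ) a b : ZMod L))) ∧
        ∃ v : (Fin g ⊕ Fin g) → ℚ,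
          (L : ℚ) • (Pi.single i 1 : (Fin g ⊕ Fin g) → ℚ) = (S.map (Int.cast : ℤ → ℚ)).mulVec v - v := by
  have hcong : ∀ (j a b : Fin g),
      (((Matrix.single j j (L : ℤ) a b : ℤ) : ZMod L)) = 0 := by
    intro j a b
    simp only [Matrix.single, Matrix.of_apply]
    split <;> simp [ZMod.natCast_self]
  cases i with
  | inl j =>
    refine ⟨fromBlocks 1 (Matrix.single j j (L : ℤ)) 0 1,
      aux_upper_mem _ (aux_std_symm j _), ?_, Sum.elim 0 (Pi.single j 1), ?_⟩
    · rintro (a | a) (b | b) <;>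
        simp [Matrix.fromBlocks, Matrix.one_apply, hcong j, apply_ite (Int.cast : ℤ → ZMod L)]
    · ext (k | k) <;>
        simp [Matrix.mulVec, dotProduct, Matrix.fromBlocks, Matrix.one_apply,
          Matrix.single, Pi.single_apply, Fintype.sum_sum_type, mul_ite, ite_and,
          eq_comm]
  | inr j =>
    refine ⟨fromBlocks 1 0 (Matrix.single j j (L : ℤ)) 1,
      aux_lower_mem _ (aux_std_symm j _), ?_, Sum.elim (Pi.single j 1) 0, ?_⟩
    · rintro (a | a) (b | b) <;>
        simp [Matrix.fromBlocks, Matrix.one_apply, hcong j, apply_ite (Int.cast : ℤ → ZMod L)]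
    · ext (k | k) <;>
        simp [Matrix.mulVec, dotProduct, Matrix.fromBlocks, Matrix.one_apply,
          Matrix.single, Pi.single_apply, Fintype.sum_sum_type, mul_ite, ite_and,
          eq_comm]

/-- For `g ≥ 1` and `L ≥ 1`, the coinvariants of the standard action of the
level-`L` congruence subgroup `Sp_{2g}(ℤ, L)` on `ℚ^{2g}` vanish: the span of the elements
`S·v - v` for `S ≡ 1 mod L` symplectic is everything. -/
theorem stmt9 (g : ℕ) (hg : 1 ≤ g) (L : ℕ) (hL : 1 ≤ L) :
    Submodule.span ℚ {x : (Fin g ⊕ Fin g) → ℚ |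
      ∃ S : Matrix (Fin g ⊕ Fin g) (Fin g ⊕ Fin g) ℤ,
        S ∈ Matrix.symplecticGroup (Fin g) ℤ ∧
        (∀ a b, ((S a b : ZMod L)) =
          (((1 : Matrix (Fin g ⊕ Fin g) (Fin g ⊕ Fin g) ℤ) a b : ZMod L))) ∧
        ∃ v : (Fin g ⊕ Fin g) → ℚ, x = (S.map (Int.cast : ℤ → ℚ)).mulVec v - v} = ⊤ := by
  have hL0 : (L : ℚ) ≠ 0 := by positivity
  rw [eq_top_iff]
  intro x _
  rw [pi_eq_sum_univ x]
  refine Submodule.sum_mem _ fun i _ => Submodule.smul_mem _ _ ?_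
  have hsingle : (fun j => if i = j then (1 : ℚ) else 0) = Pi.single i 1 := by
    ext j
    simp [Pi.single_apply, eq_comm]
  rw [hsingle]
  obtain ⟨S, hS, hSc, v, hv⟩ := aux_main g L i
  have : (Pi.single i 1 : (Fin g ⊕ Fin g) → ℚ) =
      (L : ℚ)⁻¹ • ((S.map (Int.cast : ℤ → ℚ)).mulVec v - v) := by
    rw [← hv, smul_smul, inv_mul_cancel₀ hL0, one_smul]
  rw [this]
  exact Submodule.smul_mem _ _ (Submodule.subset_span ⟨S, hS, hSc, v, rfl⟩)
end

section
/- Fix g ≥ 1 and a symplectic basis a_1, b_1, …, a_g, b_g of Z^{2g} with its standard symplectic form i(·,·). Let K be the subgroup of Sp_{2g}(Z) consisting of all ψ that fix a_1 and act as the identity on the quotient ⟨a_1, a_2, b_2, …, a_g, b_g⟩/⟨a_1⟩. Then every ψ ∈ K is uniquely determined by the vector v = ψ(b_1) − b_1, which lies in the span of a_1, a_2, b_2, …, a_g, b_g; explicitly, for s ∈ {a_2, b_2, …, a_g, b_g}, ψ(s) = s + k·a_1 where k = −i(v, s). -/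
/-- The standard symplectic form on `ℤ^{2g}`, with `i(a_j, b_j) = 1`. -/
def sform (g : ℕ) (x y : (Fin g ⊕ Fin g) → ℤ) : ℤ :=
  ∑ j : Fin g, (x (Sum.inl j) * y (Sum.inr j) - x (Sum.inr j) * y (Sum.inl j))

/-- The standard basis vectors of `ℤ^{2g}`: `sbasis g (.inl j) = a_j`,
`sbasis g (.inr j) = b_j`. -/
def sbasis (g : ℕ) (v : Fin g ⊕ Fin g) : (Fin g ⊕ Fin g) → ℤ := Pi.single v 1

/-- The submodule `W = ⟨a₁, a₂, b₂, …, a_g, b_g⟩` (all basis vectors except `b₁`). -/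
def Wsub (g : ℕ) [NeZero g] : Submodule ℤ ((Fin g ⊕ Fin g) → ℤ) :=
  Submodule.span ℤ ((Set.range fun j : Fin g => sbasis g (Sum.inl j)) ∪
    {x | ∃ j : Fin g, j ≠ 0 ∧ x = sbasis g (Sum.inr j)})

lemma sform_a (g : ℕ) (j : Fin g) (y : (Fin g ⊕ Fin g) → ℤ) :
    sform g (sbasis g (Sum.inl j)) y = y (Sum.inr j) := by
  unfold sform sbasis
  rw [Finset.sum_eq_single j]
  · simp [Pi.single_apply]
  · intro k _ hk
    simp [Pi.single_apply, hk, (by simpa [eq_comm] using hk : ¬ j = k)]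
  · simp

lemma sform_b (g : ℕ) (j : Fin g) (y : (Fin g ⊕ Fin g) → ℤ) :
    sform g (sbasis g (Sum.inr j)) y = - y (Sum.inl j) := by
  unfold sform sbasis
  rw [Finset.sum_eq_single j]
  · simp [Pi.single_apply]
  · intro k _ hk
    simp [Pi.single_apply, hk, (by simpa [eq_comm] using hk : ¬ j = k)]
  · simp

lemma sform_add_left (g : ℕ) (x x' y : (Fin g ⊕ Fin g) → ℤ) :
    sform g (x + x') y = sform g x y + sform g x' y := by
  unfold sform
  rw [← Finset.sum_add_distrib]
  exact Finset.sum_congr rfl fun _ _ => by simp; ring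

lemma sform_smul_left (g : ℕ) (c : ℤ) (x y : (Fin g ⊕ Fin g) → ℤ) :
    sform g (c • x) y = c * sform g x y := by
  unfold sform
  rw [Finset.mul_sum]
  exact Finset.sum_congr rfl fun _ _ => by simp; ring

lemma mem_W (g : ℕ) [NeZero g] (x : (Fin g ⊕ Fin g) → ℤ) (h : x (Sum.inr 0) = 0) :
    x ∈ Wsub g := by
  have hx : x = ∑ v : Fin g ⊕ Fin g, x v • sbasis g v := by
    ext w
    rw [Finset.sum_apply]
    simp [sbasis, Pi.single_apply, eq_comm]
  rw [hx]
  refine Submodule.sum_mem _ fun v _ => ?_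
  rcases v with j | j
  · exact Submodule.smul_mem _ _ (Submodule.subset_span (Or.inl ⟨j, rfl⟩))
  · by_cases hj : j = 0
    · subst hj; rw [h, zero_smul]; exact Submodule.zero_mem _
    · exact Submodule.smul_mem _ _ (Submodule.subset_span (Or.inr ⟨j, hj, rfl⟩))

lemma psib_coord (g : ℕ) [NeZero g]
    (ψ : ((Fin g ⊕ Fin g) → ℤ) ≃ₗ[ℤ] ((Fin g ⊕ Fin g) → ℤ))
    (hform : ∀ x y, sform g (ψ x) (ψ y) = sform g x y)
    (ha : ψ (sbasis g (Sum.inl 0)) = sbasis g (Sum.inl 0)) :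
    (ψ (sbasis g (Sum.inr 0))) (Sum.inr 0) = 1 := by
  have h := hform (sbasis g (Sum.inl 0)) (sbasis g (Sum.inr 0))
  rw [ha, sform_a, sform_a] at h
  simpa [sbasis, Pi.single_apply] using h

lemma key (g : ℕ) [NeZero g]
    (ψ : ((Fin g ⊕ Fin g) → ℤ) ≃ₗ[ℤ] ((Fin g ⊕ Fin g) → ℤ))
    (hform : ∀ x y, sform g (ψ x) (ψ y) = sform g x y)
    (ha : ψ (sbasis g (Sum.inl 0)) = sbasis g (Sum.inl 0))
    (hW : ∀ x ∈ Wsub g, ψ x - x ∈ Submodule.span ℤ {sbasis g (Sum.inl 0)})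
    (s : Fin g ⊕ Fin g)
    (hs0 : sform g (sbasis g s) (sbasis g (Sum.inr 0)) = 0)
    (hsW : sbasis g s ∈ Wsub g) :
    ψ (sbasis g s) = sbasis g s +
      (-(sform g (sbasis g s) (ψ (sbasis g (Sum.inr 0)) - sbasis g (Sum.inr 0)))) •
        sbasis g (Sum.inl 0) := by
  obtain ⟨c, hc⟩ := Submodule.mem_span_singleton.1 (hW _ hsW)
  have hψs : ψ (sbasis g s) = sbasis g s + c • sbasis g (Sum.inl 0) := by
    rw [hc]; abel
  have h1 := hform (sbasis g s) (sbasis g (Sum.inr 0))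
  rw [hψs, sform_add_left, sform_smul_left, sform_a, hs0,
    psib_coord g ψ hform ha, mul_one] at h1
  have hsub : sform g (sbasis g s)
      (ψ (sbasis g (Sum.inr 0)) - sbasis g (Sum.inr 0)) =
      sform g (sbasis g s) (ψ (sbasis g (Sum.inr 0))) := by
    rcases s with j | j
    · rw [sform_a] at hs0 ⊢
      simp only [Pi.sub_apply, sform_a, hs0, sub_zero]
    · rw [sform_b] at hs0 ⊢
      simp only [Pi.sub_apply, neg_sub, sform_b]
      omega
  rw [hψs, hsub]
  congr 1
  congr 1
  omega

/-- Let `ψ ∈ Sp_{2g}(ℤ)` fix `a₁` and act as the identity on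
`⟨a₁, a₂, b₂, …⟩/⟨a₁⟩`.  Then `v = ψ(b₁) - b₁` lies in `W = ⟨a₁, a₂, b₂, …⟩`, `ψ` satisfies
`ψ(s) = s - i(s,v)·a₁` for the basis vectors `s ∈ {a₂, b₂, …, a_g, b_g}`, and `ψ` is uniquely
determined by `v`. -/
theorem stmt10 (g : ℕ) [NeZero g]
    (ψ : ((Fin g ⊕ Fin g) → ℤ) ≃ₗ[ℤ] ((Fin g ⊕ Fin g) → ℤ))
    (hform : ∀ x y, sform g (ψ x) (ψ y) = sform g x y)
    (ha : ψ (sbasis g (Sum.inl 0)) = sbasis g (Sum.inl 0))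
    (hW : ∀ x ∈ Wsub g, ψ x - x ∈ Submodule.span ℤ {sbasis g (Sum.inl 0)}) :
    (ψ (sbasis g (Sum.inr 0)) - sbasis g (Sum.inr 0) ∈ Wsub g) ∧
    (∀ j : Fin g, j ≠ 0 →
      (ψ (sbasis g (Sum.inl j)) = sbasis g (Sum.inl j) +
        (-(sform g (sbasis g (Sum.inl j))
            (ψ (sbasis g (Sum.inr 0)) - sbasis g (Sum.inr 0)))) • sbasis g (Sum.inl 0)) ∧
      (ψ (sbasis g (Sum.inr j)) = sbasis g (Sum.inr j) +
        (-(sform g (sbasis g (Sum.inr j))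
            (ψ (sbasis g (Sum.inr 0)) - sbasis g (Sum.inr 0)))) • sbasis g (Sum.inl 0))) ∧
    (∀ ψ' : ((Fin g ⊕ Fin g) → ℤ) ≃ₗ[ℤ] ((Fin g ⊕ Fin g) → ℤ),
      (∀ x y, sform g (ψ' x) (ψ' y) = sform g x y) →
      ψ' (sbasis g (Sum.inl 0)) = sbasis g (Sum.inl 0) →
      (∀ x ∈ Wsub g, ψ' x - x ∈ Submodule.span ℤ {sbasis g (Sum.inl 0)}) →
      ψ' (sbasis g (Sum.inr 0)) = ψ (sbasis g (Sum.inr 0)) → ψ' = ψ) := by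
  have haW : ∀ j : Fin g, sbasis g (Sum.inl j) ∈ Wsub g := fun j =>
    Submodule.subset_span (Or.inl ⟨j, rfl⟩)
  have hbW : ∀ j : Fin g, j ≠ 0 → sbasis g (Sum.inr j) ∈ Wsub g := fun j hj =>
    Submodule.subset_span (Or.inr ⟨j, hj, rfl⟩)
  have hform0a : ∀ j : Fin g, j ≠ 0 →
      sform g (sbasis g (Sum.inl j)) (sbasis g (Sum.inr 0)) = 0 := by
    intro j hj
    rw [sform_a]
    simp [sbasis, Pi.single_apply, hj]
  have hform0b : ∀ j : Fin g, j ≠ 0 →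
      sform g (sbasis g (Sum.inr j)) (sbasis g (Sum.inr 0)) = 0 := by
    intro j hj
    rw [sform_b]
    simp [sbasis, Pi.single_apply]
  refine ⟨?_, ?_, ?_⟩
  · exact mem_W g _ (by rw [Pi.sub_apply, psib_coord g ψ hform ha]; simp [sbasis, Pi.single_apply])
  · intro j hj
    exact ⟨key g ψ hform ha hW _ (hform0a j hj) (haW j),
      key g ψ hform ha hW _ (hform0b j hj) (hbW j hj)⟩
  · intro ψ' hform' ha' hW' hb'
    refine LinearEquiv.toLinearMap_injective
      (Module.Basis.ext (Pi.basisFun ℤ (Fin g ⊕ Fin g)) fun v => ?_)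
    have hbv : (Pi.basisFun ℤ (Fin g ⊕ Fin g)) v = sbasis g v := by
      simp [sbasis, Pi.basisFun_apply]
    simp only [LinearEquiv.coe_coe, hbv]
    rcases v with j | j
    · by_cases hj : j = 0
      · subst hj; rw [ha, ha']
      · rw [key g ψ hform ha hW _ (hform0a j hj) (haW j),
          key g ψ' hform' ha' hW' _ (hform0a j hj) (haW j), hb']
    · by_cases hj : j = 0
      · subst hj; exact hb'
      · rw [key g ψ hform ha hW _ (hform0b j hj) (hbW j hj),
          key g ψ' hform' ha' hW' _ (hform0b j hj) (hbW j hj), hb']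
end
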